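/- For every L-structure A, every hypersubstitution σ of L, and every identity p = q of L, the identity p = q is satisfied in the derived structure A^σ if and only if the identity σ̂(p) = σ̂(q) is satisfied in A. Consequently, an identity is hyper-satisfied in A if and only if it is satisfied in every derived structure A^σ. -/

import Mathlib

open FirstOrder Language

universe u v w

/-- A hypersubstitution of `L` assigns to each `n`-ary function symbol of `L`
an `L`-term with variables in `Fin n`. -/
def Hypersub (L : FirstOrder.Language.{u, v}) : Type _ :=
  ∀ n : ℕ, L.Functions n → L.Term (Fin n)

variable {L : FirstOrder.Language.{u, v}}

/-- The extension `σ̂` of a hypersubstitution `σ` to all terms. -/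
def Hypersub.apply (σ : Hypersub L) {α : Type w} : L.Term α → L.Term α
  | Term.var x => Term.var x
  | Term.func f ts => Term.subst (σ _ f) (fun i => Hypersub.apply σ (ts i))

/-- The derived structure `A^σ`: same universe, each function symbol `f` is
interpreted by the term function of `σ f` in `A`. -/
def Hypersub.derive (σ : Hypersub L) {A : Type w} (S : L.Structure A) : L.Structure A :=
  letI := S
  { funMap := fun {n} f v => (σ n f).realize v
    RelMap := fun r v => Structure.RelMap r v }

/-- Realization of a term in an explicitly given structure. -/
def realizeIn {A : Type w} (S : L.Structure A) {α : Type*} (a : α → A) (t : L.Term α) : A :=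
  letI := S
  t.realize a

/-- An identity `p = q` of `L` in `k` variables. -/
structure Identity (L : FirstOrder.Language.{u, v}) : Type max u (v + 1) where
  k : ℕ
  lhs : L.Term (Fin k)
  rhs : L.Term (Fin k)

/-- Satisfaction of an identity in a structure. -/
def Identity.Satisfied (e : Identity L) {A : Type w} (S : L.Structure A) : Prop :=
  ∀ a : Fin e.k → A, realizeIn S a e.lhs = realizeIn S a e.rhs

/-- The identity `σ̂ p = σ̂ q`. -/
def Identity.hmap (σ : Hypersub L) (e : Identity L) : Identity L :=
  ⟨e.k, σ.apply e.lhs, σ.apply e.rhs⟩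

/-- An identity is hyper-satisfied if `σ̂ p = σ̂ q` is satisfied for every
hypersubstitution `σ`. -/
def Identity.HyperSatisfied (e : Identity L) {A : Type w} (S : L.Structure A) : Prop :=
  ∀ σ : Hypersub L, (e.hmap σ).Satisfied S

theorem Hypersub.realizeIn_derive (σ : Hypersub L) {A : Type w} (S : L.Structure A) {α : Type*}
    (a : α → A) (t : L.Term α) :
    realizeIn (σ.derive S) a t = realizeIn S a (σ.apply t) := by
  induction t with
  | var x => rfl
  | func f ts ih =>
    change realizeIn S (fun i => realizeIn (σ.derive S) a (ts i)) (σ _ f) = _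
    rw [funext ih]
    exact (Term.realize_subst ..).symm

theorem Identity.satisfied_derive_iff (σ : Hypersub L) (e : Identity L) {A : Type w}
    (S : L.Structure A) : e.Satisfied (σ.derive S) ↔ (e.hmap σ).Satisfied S := by
  simp only [Identity.Satisfied, Identity.hmap, Hypersub.realizeIn_derive]

theorem identity_satisfied_derive_iff_general {L : FirstOrder.Language.{u, v}}
    {A : Type w} (S : L.Structure A) :
    (∀ (σ : Hypersub L) (e : Identity L),
        e.Satisfied (σ.derive S) ↔ (e.hmap σ).Satisfied S) ∧
    (∀ e : Identity L,
        e.HyperSatisfied S ↔ ∀ σ : Hypersub L, e.Satisfied (σ.derive S)) :=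
  ⟨fun σ e => e.satisfied_derive_iff σ S,
    fun e => forall_congr' fun σ => (e.satisfied_derive_iff σ S).symm⟩

/-- An identity `p = q` is satisfied in the derived structure
`A^σ` if and only if `σ̂ p = σ̂ q` is satisfied in `A`. Consequently, an identity
is hyper-satisfied in `A` iff it is satisfied in every derived structure `A^σ`. -/
theorem identity_satisfied_derive_iff {L : FirstOrder.Language.{u, v}} [L.IsAlgebraic]
    {A : Type w} (S : L.Structure A) :
    (∀ (σ : Hypersub L) (e : Identity L),
        e.Satisfied (σ.derive S) ↔ (e.hmap σ).Satisfied S) ∧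
    (∀ e : Identity L,
        e.HyperSatisfied S ↔ ∀ σ : Hypersub L, e.Satisfied (σ.derive S)) :=
  identity_satisfied_derive_iff_general S
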